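/- arXiv:2012.07457 — 3 statements merged into one kernel-verified Lean document; each statement's English description precedes it below -/
import Mathlib

section
/- Let $M$ be a matroid, $\mathcal{A}_1$ a family of independent sets of size $p_1$, and $\mathcal{A}_2$ a family of independent sets of size $p_2$. Define the convolution $\mathcal{A}_1 * \mathcal{A}_2 = \{A \cup B : A \in \mathcal{A}_1, B \in \mathcal{A}_2, A \cap B = \emptyset\}$. If $\mathcal{A}_1'$ $(k - p_1)$-represents $\mathcal{A}_1$ and $\mathcal{A}_2'$ $(k - p_2)$-represents $\mathcal{A}_2$, then $\mathcal{A}_1' * \mathcal{A}_2'$ $(k - p_1 - p_2)$-represents $\mathcal{A}_1 * \mathcal{A}_2$. -/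
/-- `A` fits `B` in the matroid `M`: they are disjoint and their union is independent. -/
def Fits {α : Type*} [DecidableEq α] (M : Matroid α) (A B : Finset α) : Prop :=
  Disjoint A B ∧ M.Indep (↑(A ∪ B) : Set α)

/-- `𝒜'` `q`-represents `𝒜`. -/
def QRep {α : Type*} [DecidableEq α] (M : Matroid α) (q : ℕ) (𝒜' 𝒜 : Set (Finset α)) : Prop :=
  𝒜' ⊆ 𝒜 ∧ ∀ B : Finset α, B.card = q →
    (∃ A ∈ 𝒜, Fits M A B) → ∃ A' ∈ 𝒜', Fits M A' B

/-- Convolution of two families: disjoint unions of a member of each. -/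
def Conv {α : Type*} [DecidableEq α] (𝒜₁ 𝒜₂ : Set (Finset α)) : Set (Finset α) :=
  {S | ∃ A ∈ 𝒜₁, ∃ B ∈ 𝒜₂, Disjoint A B ∧ S = A ∪ B}

/-- If `𝒜₁'` `(k-p₁)`-represents `𝒜₁` and `𝒜₂'` `(k-p₂)`-represents `𝒜₂`, then
`𝒜₁' * 𝒜₂'` `(k-p₁-p₂)`-represents `𝒜₁ * 𝒜₂`. -/
theorem qRep_conv {α : Type*} [DecidableEq α] (M : Matroid α) (k p₁ p₂ : ℕ)
    (hk : p₁ + p₂ ≤ k) (𝒜₁ 𝒜₂ 𝒜₁' 𝒜₂' : Set (Finset α))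
    (h₁ : ∀ A ∈ 𝒜₁, A.card = p₁ ∧ M.Indep (↑A : Set α))
    (h₂ : ∀ A ∈ 𝒜₂, A.card = p₂ ∧ M.Indep (↑A : Set α))
    (r₁ : QRep M (k - p₁) 𝒜₁' 𝒜₁) (r₂ : QRep M (k - p₂) 𝒜₂' 𝒜₂) :
    QRep M (k - p₁ - p₂) (Conv 𝒜₁' 𝒜₂') (Conv 𝒜₁ 𝒜₂) := by
  obtain ⟨s₁, hr₁⟩ := r₁
  obtain ⟨s₂, hr₂⟩ := r₂
  constructor
  · rintro S ⟨A, hA, B, hB, hd, rfl⟩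
    exact ⟨A, s₁ hA, B, s₂ hB, hd, rfl⟩
  · rintro B hB ⟨S, ⟨A₁, hA₁, A₂, hA₂, hd12, rfl⟩, hdB, hind⟩
    have h1c := (h₁ A₁ hA₁).1
    have h2c := (h₂ A₂ hA₂).1
    have hd1B : Disjoint A₁ B := (Finset.disjoint_union_left.mp hdB).1
    have hd2B : Disjoint A₂ B := (Finset.disjoint_union_left.mp hdB).2
    have hcard1 : (A₂ ∪ B).card = k - p₁ := by
      rw [Finset.card_union_of_disjoint hd2B]; omega
    have hfit1 : Fits M A₁ (A₂ ∪ B) := by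
      refine ⟨Finset.disjoint_union_right.mpr ⟨hd12, hd1B⟩, ?_⟩
      rwa [← Finset.union_assoc]
    obtain ⟨A₁', hA₁', hd1', hind1⟩ := hr₁ (A₂ ∪ B) hcard1 ⟨A₁, hA₁, hfit1⟩
    have h1c' := (h₁ A₁' (s₁ hA₁')).1
    have hd1'2 : Disjoint A₁' A₂ := (Finset.disjoint_union_right.mp hd1').1
    have hd1'B : Disjoint A₁' B := (Finset.disjoint_union_right.mp hd1').2
    have hcard2 : (A₁' ∪ B).card = k - p₂ := by
      rw [Finset.card_union_of_disjoint hd1'B]; omega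
    have hfit2 : Fits M A₂ (A₁' ∪ B) := by
      refine ⟨Finset.disjoint_union_right.mpr ⟨hd1'2.symm, hd2B⟩, ?_⟩
      have h : A₂ ∪ (A₁' ∪ B) = A₁' ∪ (A₂ ∪ B) := Finset.union_left_comm _ _ _
      rwa [h]
    obtain ⟨A₂', hA₂', hd2', hind2⟩ := hr₂ (A₁' ∪ B) hcard2 ⟨A₂, hA₂, hfit2⟩
    have hd2'1 : Disjoint A₂' A₁' := (Finset.disjoint_union_right.mp hd2').1
    have hd2'B : Disjoint A₂' B := (Finset.disjoint_union_right.mp hd2').2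
    refine ⟨A₁' ∪ A₂', ⟨A₁', hA₁', A₂', hA₂', hd2'1.symm, rfl⟩, ?_, ?_⟩
    · exact Finset.disjoint_union_left.mpr ⟨hd1'B, hd2'B⟩
    · have h : A₁' ∪ A₂' ∪ B = A₂' ∪ (A₁' ∪ B) := by
        rw [Finset.union_comm A₁' A₂', Finset.union_assoc]
      rwa [h]
end

section
/- Let $M$ be the uniform matroid of rank $r$ on universe $U$ (independent sets are exactly the subsets of size at most $r$), and let $\mathcal{A}$ be a family of sets of size $p$ with $p + q \leq r$. Then there exists a subfamily $\mathcal{A}' \subseteq \mathcal{A}$ with $|\mathcal{A}'| \leq \binom{p+q}{p}$ that $q$-represents $\mathcal{A}$. -/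
open Polynomial

noncomputable section

namespace UniformRep

/-- The monomial function attached to a multiset of variable indices. -/
def mon {k : ℕ} (s : Multiset (Fin k)) : (Fin k → ℝ) → ℝ := fun z => (s.map z).prod

lemma prod_linear_mem_span {α : Type*} [DecidableEq α] {k : ℕ} (C : α → Fin k → ℝ)
    (s : Finset α) :
    (fun z : Fin k → ℝ => ∏ a ∈ s, ∑ j, z j * C a j) ∈
      Submodule.span ℝ (Set.range fun t : Sym (Fin k) s.card => mon (t : Multiset (Fin k))) := by
  induction s using Finset.induction_on with
  | empty =>
      apply Submodule.subset_span
      exact ⟨(⟨0, rfl⟩ : Sym (Fin k) (∅ : Finset α).card), by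
        funext z; simp [mon]; exact (congrArg Multiset.prod (Multiset.map_zero z)).trans Multiset.prod_zero⟩
  | @insert a s ha ih =>
      rw [Finset.card_insert_of_notMem ha]
      let L : ((Fin k → ℝ) → ℝ) →ₗ[ℝ] ((Fin k → ℝ) → ℝ) :=
        { toFun := fun f z => (∑ j, z j * C a j) * f z
          map_add' := by intro f g; funext z; simp [mul_add]
          map_smul' := by intro c f; funext z; simp only [Pi.smul_apply, smul_eq_mul,
            RingHom.id_apply]; ring }
      have hfun : (fun z : Fin k → ℝ => ∏ b ∈ insert a s, ∑ j, z j * C b j)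
          = L (fun z => ∏ b ∈ s, ∑ j, z j * C b j) := by
        funext z; simp [L, Finset.prod_insert ha]
      rw [hfun]
      have h1 : L (fun z => ∏ b ∈ s, ∑ j, z j * C b j) ∈
          Submodule.span ℝ (L '' (Set.range fun t : Sym (Fin k) s.card => mon (t : Multiset (Fin k)))) :=
        Submodule.apply_mem_span_image_of_mem_span L ih
      refine Submodule.span_le.mpr ?_ h1
      rintro x ⟨-, ⟨t, rfl⟩, rfl⟩
      have hx : L (mon (t : Multiset (Fin k)))
          = ∑ j : Fin k, C a j •
              mon ((j ::ₛ t : Sym (Fin k) (s.card + 1)) : Multiset (Fin k)) := by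
        funext z
        simp only [L, mon, LinearMap.coe_mk, AddHom.coe_mk, Finset.sum_apply, Pi.smul_apply,
          smul_eq_mul, Sym.coe_cons, Multiset.map_cons, Multiset.prod_cons]
        rw [Finset.sum_mul]
        exact Finset.sum_congr rfl fun j _ => by ring
      rw [hx]
      exact Submodule.sum_mem _ fun j _ => Submodule.smul_mem _ _
        (Submodule.subset_span ⟨j ::ₛ t, rfl⟩)


lemma skew_bound {α : Type*} [DecidableEq α] {n p q : ℕ} (A B : Fin n → Finset α)
    (hA : ∀ i, (A i).card = p) (hB : ∀ i, (B i).card = q)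
    (hd : ∀ i, Disjoint (A i) (B i))
    (hskew : ∀ i j, i < j → ¬ Disjoint (A i) (B j)) :
    n ≤ (p + q).choose p := by
  classical
  set U : Finset α := Finset.univ.biUnion (fun i => A i ∪ B i) with hU
  set t : α → ℝ := fun a => if h : a ∈ U then ((U.equivFin ⟨a, h⟩ : Fin _) : ℝ) else 0 with ht
  have tinj : ∀ ⦃a⦄, a ∈ U → ∀ ⦃b⦄, b ∈ U → t a = t b → a = b := by
    intro a ha b hb hab
    simp only [ht, dif_pos ha, dif_pos hb] at hab
    have : U.equivFin ⟨a, ha⟩ = U.equivFin ⟨b, hb⟩ := by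
      ext
      exact_mod_cast hab
    simpa using U.equivFin.injective this
  have hAU : ∀ i, A i ⊆ U := fun i x hx =>
    Finset.mem_biUnion.mpr ⟨i, Finset.mem_univ i, Finset.mem_union_left _ hx⟩
  have hBU : ∀ i, B i ⊆ U := fun i x hx =>
    Finset.mem_biUnion.mpr ⟨i, Finset.mem_univ i, Finset.mem_union_right _ hx⟩
  set P : Fin n → ℝ[X] := fun j => ∏ b ∈ B j, (X - Polynomial.C (t b)) with hP
  have hPdeg : ∀ j, (P j).natDegree = q := by
    intro j
    rw [hP]
    rw [Polynomial.natDegree_prod _ _ (fun b _ => X_sub_C_ne_zero (t b))]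
    simp [hB j]
  set y : Fin n → (Fin (q + 1) → ℝ) := fun j k => (P j).coeff k with hy
  set f : Fin n → ((Fin (q + 1) → ℝ) → ℝ) :=
    fun i z => ∏ a ∈ A i, ∑ k : Fin (q + 1), z k * t a ^ (k : ℕ) with hf
  have heval : ∀ i j, f i (y j) = ∏ a ∈ A i, (P j).eval (t a) := by
    intro i j
    refine Finset.prod_congr rfl fun a _ => ?_
    rw [Polynomial.eval_eq_sum_range' (lt_of_le_of_lt (hPdeg j).le (Nat.lt_succ_self q))]
    rw [← Fin.sum_univ_eq_sum_range (fun m => (P j).coeff m * t a ^ m)]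
  have hdiag : ∀ i, f i (y i) ≠ 0 := by
    intro i
    rw [heval]
    rw [Finset.prod_ne_zero_iff]
    intro a ha
    rw [hP]
    simp only [Polynomial.eval_prod, Polynomial.eval_sub, Polynomial.eval_X, Polynomial.eval_C]
    rw [Finset.prod_ne_zero_iff]
    intro b hb
    have hab : a ≠ b := fun h => (Finset.disjoint_left.mp (hd i) ha) (h ▸ hb)
    exact sub_ne_zero_of_ne fun h => hab (tinj (hAU i ha) (hBU i hb) h)
  have htri : ∀ i j, i < j → f i (y j) = 0 := by
    intro i j hij
    obtain ⟨a, haA, haB⟩ := Finset.not_disjoint_iff.mp (hskew i j hij)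
    rw [heval]
    refine Finset.prod_eq_zero haA ?_
    rw [hP]
    rw [Polynomial.eval_prod]
    exact Finset.prod_eq_zero haB (by simp)
  have li : LinearIndependent ℝ f := by
    rw [Fintype.linearIndependent_iff]
    intro g hg
    have key : ∀ d : ℕ, ∀ j : Fin n, n - (j : ℕ) ≤ d → g j = 0 := by
      intro d
      induction d with
      | zero =>
          intro j hj
          exact absurd hj (by have := j.isLt; omega)
      | succ d ih =>
          intro j hj
          have hzero : ∀ j' : Fin n, (j : ℕ) < (j' : ℕ) → g j' = 0 := by
            intro j' hj'
            exact ih j' (by omega)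
          have hgj := congrFun hg (y j)
          simp only [Finset.sum_apply, Pi.smul_apply, smul_eq_mul, Pi.zero_apply] at hgj
          have hsingle : ∑ i : Fin n, g i * f i (y j) = g j * f j (y j) := by
            refine Finset.sum_eq_single_of_mem j (Finset.mem_univ j) ?_
            intro i _ hij
            rcases lt_or_gt_of_ne hij with h | h
            · rw [htri i j h, mul_zero]
            · rw [hzero i h, zero_mul]
          rw [hsingle] at hgj
          exact (mul_eq_zero.mp hgj).resolve_right (hdiag j)
    intro j
    exact key n j (by omega)
  have hspan : ∀ i, f i ∈ Submodule.span ℝ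
      (Set.range fun s : Sym (Fin (q + 1)) p => mon (s : Multiset (Fin (q + 1)))) := by
    intro i
    have h := prod_linear_mem_span (k := q + 1) (fun a k => t a ^ (k : ℕ)) (A i)
    rw [hA i] at h
    exact h
  set W := Submodule.span ℝ
    (Set.range fun s : Sym (Fin (q + 1)) p => mon (s : Multiset (Fin (q + 1)))) with hW
  haveI : FiniteDimensional ℝ W := FiniteDimensional.span_of_finite ℝ (Set.finite_range _)
  have li' : LinearIndependent ℝ (fun i => (⟨f i, hspan i⟩ : W)) := by
    apply LinearIndependent.of_comp W.subtype
    exact li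
  have h1 : n ≤ Module.finrank ℝ W := by
    simpa using li'.fintype_card_le_finrank
  have h2 : Module.finrank ℝ W ≤ Fintype.card (Sym (Fin (q + 1)) p) :=
    finrank_range_le_card _
  have h3 : Fintype.card (Sym (Fin (q + 1)) p) = (p + q).choose p := by
    rw [Sym.card_sym_eq_multichoose, Nat.multichoose_eq, Fintype.card_fin]
    congr 1
    omega
  omega
/-- The greedily (transfinitely) kept subfamily of `𝒜`, with respect to the
well-ordering `WellOrderingRel`. -/
def keptFam {α : Type*} (𝒜 : Set (Finset α)) (q : ℕ) : Finset α → Prop :=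
  (IsWellFounded.wf (r := WellOrderingRel (α := Finset α))).fix
    (fun A ih => A ∈ 𝒜 ∧ ∃ B : Finset α, B.card = q ∧ Disjoint A B ∧
       ∀ A' (h : WellOrderingRel A' A), ih A' h → ¬ Disjoint A' B)

lemma keptFam_iff {α : Type*} (𝒜 : Set (Finset α)) (q : ℕ) (A : Finset α) :
    keptFam 𝒜 q A ↔ A ∈ 𝒜 ∧ ∃ B : Finset α, B.card = q ∧ Disjoint A B ∧
      ∀ A', WellOrderingRel A' A → keptFam 𝒜 q A' → ¬ Disjoint A' B := by
  unfold keptFam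
  exact Iff.of_eq (WellFounded.fix_eq _ _ _)

end UniformRep

/-- For the uniform matroid of rank `r` (independent sets are those of size at most
`r`), every family `𝒜` of `p`-sets with `p + q ≤ r` has a `q`-representative
subfamily of size at most `(p+q choose p)`. Here `A` fits a `q`-set `B` iff they are
disjoint and `|A ∪ B| ≤ r`. -/
theorem uniform_matroid_representative_sets {α : Type*} [DecidableEq α]
    (r p q : ℕ) (hpq : p + q ≤ r) (𝒜 : Set (Finset α))
    (h𝒜 : ∀ A ∈ 𝒜, A.card = p) :
    ∃ 𝒜' : Set (Finset α), 𝒜' ⊆ 𝒜 ∧ 𝒜'.Finite ∧ 𝒜'.ncard ≤ (p + q).choose p ∧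
      ∀ B : Finset α, B.card = q →
        (∃ A ∈ 𝒜, Disjoint A B ∧ (A ∪ B).card ≤ r) →
        ∃ A' ∈ 𝒜', Disjoint A' B ∧ (A' ∪ B).card ≤ r := by
  classical
  set K : Set (Finset α) := {A | UniformRep.keptFam 𝒜 q A} with hK
  have hKsub : K ⊆ 𝒜 := fun A hA => ((UniformRep.keptFam_iff 𝒜 q A).mp hA).1
  have hWit : ∀ A ∈ K, ∃ B : Finset α, B.card = q ∧ Disjoint A B ∧
      ∀ A', WellOrderingRel A' A → UniformRep.keptFam 𝒜 q A' → ¬ Disjoint A' B :=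
    fun A hA => ((UniformRep.keptFam_iff 𝒜 q A).mp hA).2
  choose! w hw1 hw2 hw3 using hWit
  have hbound : ∀ T : Finset (Finset α), ↑T ⊆ K → T.card ≤ (p + q).choose p := by
    intro T hT
    set rr : Finset α → Finset α → Prop :=
      (fun X Y => X = Y ∨ WellOrderingRel X Y) with hrr
    haveI : DecidableRel rr := Classical.decRel _
    haveI htrans : IsTrans (Finset α) rr := ⟨by
      rintro a b c (rfl | hab) (rfl | hbc)
      · exact Or.inl rfl
      · exact Or.inr hbc
      · exact Or.inr hab
      · exact Or.inr (_root_.trans hab hbc)⟩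
    haveI hanti : IsAntisymm (Finset α) rr := ⟨by
      rintro a b (rfl | hab) (h | hba)
      · rfl
      · rfl
      · exact h.symm
      · exact absurd hba (asymm hab)⟩
    haveI htotal : IsTotal (Finset α) rr := ⟨by
      intro a b
      rcases trichotomous_of WellOrderingRel a b with h | rfl | h
      · exact Or.inl (Or.inr h)
      · exact Or.inl (Or.inl rfl)
      · exact Or.inr (Or.inr h)⟩
    set l : List (Finset α) := T.sort rr with hl
    have hlen : l.length = T.card := Finset.length_sort (s := T) (r := rr)
    have hnd : l.Nodup := Finset.sort_nodup (s := T) (r := rr)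
    have hsorted : l.Pairwise rr := Finset.pairwise_sort (s := T) (r := rr)
    have hmemT : ∀ i : Fin l.length, l.get i ∈ T := fun i =>
      (Finset.mem_sort (r := rr)).mp (l.get_mem i)
    have hmemK : ∀ i : Fin l.length, l.get i ∈ K := fun i => hT (hmemT i)
    rw [← hlen]
    refine UniformRep.skew_bound (fun i => l.get i) (fun i => w (l.get i)) ?_ ?_ ?_ ?_
    · intro i; exact h𝒜 _ (hKsub (hmemK i))
    · intro i; exact hw1 _ (hmemK i)
    · intro i; exact hw2 _ (hmemK i)
    · intro i j hij
      have hne : l.get i ≠ l.get j := fun h => absurd (hnd.get_inj_iff.mp h) (Fin.ne_of_lt hij)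
      have hrel : WellOrderingRel (l.get i) (l.get j) :=
        (hsorted.rel_get_of_lt hij).resolve_left hne
      exact hw3 _ (hmemK j) _ hrel (hmemK i)
  have hfin : K.Finite := by
    rw [← Set.not_infinite]
    intro hinf
    obtain ⟨T, hT, hcard⟩ := hinf.exists_subset_card_eq ((p + q).choose p + 1)
    have := hbound T hT
    omega
  have hncard : K.ncard ≤ (p + q).choose p := by
    have h := hbound hfin.toFinset (by simp)
    rwa [Set.ncard_eq_toFinset_card K hfin]
  refine ⟨K, hKsub, hfin, hncard, ?_⟩
  rintro B hB ⟨A₀, hA₀, hdisj₀, -⟩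
  by_contra hcon
  push_neg at hcon
  have hnone : ∀ A', UniformRep.keptFam 𝒜 q A' → ¬ Disjoint A' B := by
    intro A' hk hd
    have h1 := hcon A' hk hd
    have h2 : (A' ∪ B).card = p + q := by
      rw [Finset.card_union_of_disjoint hd, h𝒜 _ (hKsub hk), hB]
    omega
  have hkept : UniformRep.keptFam 𝒜 q A₀ :=
    (UniformRep.keptFam_iff 𝒜 q A₀).mpr ⟨hA₀, B, hB, hdisj₀, fun A' _ hk => hnone A' hk⟩
  exact hnone A₀ hkept hdisj₀

end
end

section
/- Let $G$ be a graph with vertex coloring $\chi$, let $s, u \in V(G)$, and for each $p \geq 0$ let $\mathcal{P}_u^p$ be the family of color sets $X$ such that there is a colorful $s$-$u$ path of length $p$ whose set of used colors is exactly $X$. Then for $p \geq 1$ and any vertex $v \neq s$, $\mathcal{P}_v^p = \bigcup_{uv \in E(G)} \{ X \cup \{\chi(v)\} : X \in \mathcal{P}_u^{p-1},\ \chi(v) \notin X \}$. -/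
/-- The family of color sets of colorful `s`-`u` paths of length `p`: sets `X` such
that some path from `s` to `u` of length `p` has pairwise distinct vertex colors
whose set is exactly `X`. -/
def colorSets {V : Type*} (G : SimpleGraph V) (χ : V → ℕ) (s u : V) (p : ℕ) :
    Set (Finset ℕ) :=
  {X | ∃ w : G.Walk s u, w.IsPath ∧ w.length = p ∧ (w.support.map χ).Nodup ∧
    X = (w.support.map χ).toFinset}

/-- Recurrence for the color sets of colorful paths: for `p ≥ 1` and `v ≠ s`,
`𝒫_v^p = ⋃_{uv ∈ E(G)} { X ∪ {χ(v)} : X ∈ 𝒫_u^{p-1}, χ(v) ∉ X }`. -/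
theorem colorSets_recurrence {V : Type*} (G : SimpleGraph V) (χ : V → ℕ)
    (s v : V) (p : ℕ) (hp : 1 ≤ p) (hv : v ≠ s) :
    colorSets G χ s v p =
      {Y | ∃ u, G.Adj u v ∧ ∃ X ∈ colorSets G χ s u (p - 1),
        χ v ∉ X ∧ Y = insert (χ v) X} := by
  ext Y
  simp only [colorSets, Set.mem_setOf_eq]
  constructor
  · rintro ⟨w, hpath, hlen, hnodup, rfl⟩
    -- decompose w from the end
    have hne : ¬ w.reverse.Nil := by
      rw [SimpleGraph.Walk.not_nil_iff_lt_length]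
      simp [hlen]; omega
    obtain ⟨y, h, q, hq⟩ := SimpleGraph.Walk.not_nil_iff.mp hne
    have hw : w = q.reverse.concat h.symm := by
      have := congrArg SimpleGraph.Walk.reverse hq
      simpa [SimpleGraph.Walk.reverse_cons, SimpleGraph.Walk.concat_eq_append] using this
    subst hw
    refine ⟨y, h.symm, (q.reverse.support.map χ).toFinset, ⟨q.reverse, ?_, ?_, ?_, rfl⟩, ?_, ?_⟩
    · rw [SimpleGraph.Walk.isPath_def] at hpath ⊢
      simp only [SimpleGraph.Walk.support_concat, List.concat_eq_append,
        List.nodup_append] at hpath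
      exact hpath.1
    · have h1 : q.reverse.length + 1 = p := by
        simpa [SimpleGraph.Walk.length_concat] using hlen
      omega
    · simp only [SimpleGraph.Walk.support_concat, List.concat_eq_append, List.map_append,
        List.nodup_append] at hnodup
      exact hnodup.1
    · simp only [SimpleGraph.Walk.support_concat, List.concat_eq_append, List.map_append,
        List.nodup_append] at hnodup
      intro hmem
      rw [List.mem_toFinset] at hmem
      exact hnodup.2.2 _ hmem _ (by simp) rfl
    · simp [SimpleGraph.Walk.support_concat, List.concat_eq_append]
  · rintro ⟨u, hadj, X, ⟨w, hpath, hlen, hnodup, rfl⟩, hχ, rfl⟩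
    rw [List.mem_toFinset] at hχ
    refine ⟨w.concat hadj, ?_, ?_, ?_, ?_⟩
    · rw [SimpleGraph.Walk.isPath_def] at hpath ⊢
      simp only [SimpleGraph.Walk.support_concat, List.concat_eq_append, List.nodup_append]
      refine ⟨hpath, List.nodup_singleton v, ?_⟩
      intro a ha b hb
      simp only [List.mem_singleton] at hb
      subst hb
      rintro rfl
      exact hχ (List.mem_map_of_mem (f := χ) ha)
    · simp [SimpleGraph.Walk.length_concat]; omega
    · simp only [SimpleGraph.Walk.support_concat, List.concat_eq_append, List.map_append,
        List.nodup_append]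
      refine ⟨hnodup, List.nodup_singleton _, ?_⟩
      intro a ha b hb
      simp only [List.map_cons, List.map_nil, List.mem_singleton] at hb
      subst hb; rintro rfl; exact hχ ha
    · simp [SimpleGraph.Walk.support_concat, List.concat_eq_append]
end
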